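/- arXiv:1312.4715 — 6 statements merged into one kernel-verified Lean document; each statement's English description precedes it below -/
import Mathlib

section
/- For γ > 1, the function f(z) = (γ-1)(z^{γ+1} - 1) - (γ+1)z(z^{γ-1} - 1) satisfies f(z) > 0 for all z > 1. -/
open Real Set

/- The derivative of `f` is `(γ + 1) ((γ - 1) z^γ - γ z^(γ-1) + 1)`, positive for `z > 1` by
Bernoulli's inequality for `1 / z`; since `f 1 = 0`, `f` is positive on `(1, ∞)`. -/

lemma mul_rpow_sub_one_lt_sub_one_mul_rpow_add_one {p x : ℝ} (hp : 1 < p) (hx : 0 < x)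
    (hx1 : x ≠ 1) : p * x ^ (p - 1) < (p - 1) * x ^ p + 1 := by
  have hbern : 1 + p * (x⁻¹ - 1) < x⁻¹ ^ p := by
    have h := one_add_mul_self_lt_rpow_one_add (by linarith [inv_pos.2 hx] : -1 ≤ x⁻¹ - 1)
      (sub_ne_zero.2 (inv_ne_one.2 hx1)) hp
    rwa [add_sub_cancel] at h
  have hxp : 0 < x ^ p := rpow_pos_of_pos hx p
  have hinv : x⁻¹ ^ p * x ^ p = 1 := by
    rw [inv_rpow hx.le, inv_mul_cancel₀ hxp.ne']
  have hpred : x⁻¹ * x ^ p = x ^ (p - 1) := by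
    rw [rpow_sub_one hx.ne', div_eq_inv_mul]
  nlinarith [mul_lt_mul_of_pos_right hbern hxp]

lemma hasDerivAt_rpow_gap (p : ℝ) {x : ℝ} (hx : 0 < x) :
    HasDerivAt (fun z => (p - 1) * (z ^ (p + 1) - 1) - (p + 1) * z * (z ^ (p - 1) - 1))
      ((p + 1) * ((p - 1) * x ^ p - p * x ^ (p - 1) + 1)) x := by
  have hpow (q : ℝ) : HasDerivAt (fun z : ℝ => z ^ q) (q * x ^ (q - 1)) x :=
    hasDerivAt_rpow_const (Or.inl hx.ne')
  have h := (((hpow (p + 1)).sub_const 1).const_mul (p - 1)).sub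
    (((hasDerivAt_id x).const_mul (p + 1)).mul ((hpow (p - 1)).sub_const 1))
  refine h.congr_deriv ?_
  have hpred : x * x ^ (p - 1 - 1) = x ^ (p - 1) := by
    rw [mul_comm, ← rpow_add_one hx.ne', sub_add_cancel]
  rw [add_sub_cancel_right, id]
  linear_combination -(p + 1) * (p - 1) * hpred

theorem stmt_0 (γ : ℝ) (hγ : 1 < γ) (z : ℝ) (hz : 1 < z) :
    (γ - 1) * (z ^ (γ + 1) - 1) - (γ + 1) * z * (z ^ (γ - 1) - 1) > 0 := by
  set f : ℝ → ℝ := fun z => (γ - 1) * (z ^ (γ + 1) - 1) - (γ + 1) * z * (z ^ (γ - 1) - 1)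
  have hderiv (x : ℝ) (hx : 1 ≤ x) := hasDerivAt_rpow_gap γ (x := x) (by linarith)
  have hmono : StrictMonoOn f (Ici 1) := by
    refine strictMonoOn_of_deriv_pos (convex_Ici 1)
      (fun x hx => (hderiv x hx).continuousAt.continuousWithinAt) fun x hx => ?_
    rw [interior_Ici] at hx
    rw [(hderiv x hx.out.le).deriv]
    have := mul_rpow_sub_one_lt_sub_one_mul_rpow_add_one hγ (by linarith [hx.out]) hx.out.ne'
    nlinarith
  have hf1 : f 1 = 0 := by simp [f]
  have hfz := hmono self_mem_Ici hz.le hz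
  rwa [hf1] at hfz
end

section
/- Let γ > 1, p(ρ) = ρ^γ, ε(ρ) = ρ^{γ-1}/(γ-1). Then for any distinct positive reals ρ₋, ρ₊, one has p(ρ₋) + p(ρ₊) - 2ρ₋ρ₊ (ε(ρ₊)-ε(ρ₋))/(ρ₊-ρ₋) > 0. -/
/-!
The expression is symmetric in `ρ₋, ρ₊` and homogeneous of degree `γ`, so with `t = ρ₊ / ρ₋ > 1`
it reduces to `2 (t^γ - t) < (γ - 1)(t - 1)(1 + t^γ)`. The difference of the two sides vanishes
together with its derivative at `t = 1`, and its second derivative is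
`γ (γ - 1)(γ + 1)(t - 1) t^(γ - 2) > 0`.
-/

open Set

theorem pos_of_hasDerivAt_pos_of_eq_zero {f f' : ℝ → ℝ} {a x : ℝ}
    (hf : ∀ y ∈ Ici a, HasDerivAt f (f' y) y) (hf' : ∀ y ∈ Ioi a, 0 < f' y) (ha : f a = 0)
    (hx : a < x) : 0 < f x := by
  have hmono : StrictMonoOn f (Ici a) := by
    refine strictMonoOn_of_deriv_pos (convex_Ici a)
      (fun y hy => (hf y hy).continuousAt.continuousWithinAt) fun y hy => ?_
    rw [interior_Ici] at hy
    rw [(hf y (mem_Ici.2 hy.le)).deriv]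
    exact hf' y hy
  simpa [ha] using hmono self_mem_Ici hx.le hx

theorem Real.hasDerivAt_rpow_const_of_pos {x : ℝ} (hx : 0 < x) (p : ℝ) :
    HasDerivAt (fun y : ℝ => y ^ p) (p * x ^ (p - 1)) x :=
  Real.hasDerivAt_rpow_const (Or.inl hx.ne')

theorem Real.rpow_sub_one_mul_self {x : ℝ} (hx : x ≠ 0) (p : ℝ) : x ^ (p - 1) * x = x ^ p := by
  rw [← Real.rpow_add_one hx, sub_add_cancel]

theorem two_mul_rpow_sub_lt {γ t : ℝ} (hγ : 1 < γ) (ht : 1 < t) :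
    2 * (t ^ γ - t) < (γ - 1) * (t - 1) * (1 + t ^ γ) := by
  set f' : ℝ → ℝ := fun s =>
    (γ - 1) * (1 + s ^ γ) + (γ - 1) * (s - 1) * (γ * s ^ (γ - 1)) - 2 * (γ * s ^ (γ - 1) - 1)
  set f'' : ℝ → ℝ := fun s =>
    (γ - 1) * (γ * s ^ (γ - 1))
      + (γ - 1) * (γ * s ^ (γ - 1) + (s - 1) * (γ * ((γ - 1) * s ^ (γ - 1 - 1))))
      - 2 * (γ * ((γ - 1) * s ^ (γ - 1 - 1)))
  have hf : ∀ s ∈ Ici (1 : ℝ),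
      HasDerivAt (fun s => (γ - 1) * (s - 1) * (1 + s ^ γ) - 2 * (s ^ γ - s)) (f' s) s := by
    intro s hs
    have hs0 : 0 < s := zero_lt_one.trans_le hs
    refine (((((hasDerivAt_id s).sub_const 1).const_mul (γ - 1)).mul
      ((Real.hasDerivAt_rpow_const_of_pos hs0 γ).const_add 1)).sub
      (((Real.hasDerivAt_rpow_const_of_pos hs0 γ).sub (hasDerivAt_id s)).const_mul 2)).congr_deriv ?_
    simp only [f', id]
    ring
  have hf' : ∀ s ∈ Ici (1 : ℝ), HasDerivAt f' (f'' s) s := by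
    intro s hs
    have hs0 : 0 < s := zero_lt_one.trans_le hs
    refine ((((Real.hasDerivAt_rpow_const_of_pos hs0 γ).const_add 1).const_mul (γ - 1)).add
      ((((hasDerivAt_id s).sub_const 1).const_mul (γ - 1)).mul
        ((Real.hasDerivAt_rpow_const_of_pos hs0 (γ - 1)).const_mul γ)) |>.sub
      ((((Real.hasDerivAt_rpow_const_of_pos hs0 (γ - 1)).const_mul γ).sub_const 1).const_mul 2)
      ).congr_deriv ?_
    simp only [f'', id]
    ring
  have hf'' : ∀ s ∈ Ioi (1 : ℝ), 0 < f'' s := by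
    intro s (hs : 1 < s)
    have hs0 : 0 < s := zero_lt_one.trans hs
    have hf''_eq : f'' s = γ * (γ - 1) * (γ + 1) * (s - 1) * s ^ (γ - 1 - 1) := by
      simp only [f'']
      rw [← Real.rpow_sub_one_mul_self hs0.ne' (γ - 1)]
      ring
    rw [hf''_eq]
    have := Real.rpow_pos_of_pos hs0 (γ - 1 - 1)
    have := sub_pos.2 hγ
    have := sub_pos.2 hs
    positivity
  have hf'_one : f' 1 = 0 := by
    simp only [f', Real.one_rpow]
    ring
  have := pos_of_hasDerivAt_pos_of_eq_zero hf
    (fun s hs => pos_of_hasDerivAt_pos_of_eq_zero hf' hf'' hf'_one hs) (by simp) ht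
  linarith

theorem rpow_add_rpow_sub_two_mul_mul_slope_pos_of_lt {γ a b : ℝ} (hγ : 1 < γ) (ha : 0 < a)
    (hab : a < b) :
    0 < a ^ γ + b ^ γ - 2 * a * b * slope (fun ρ => ρ ^ (γ - 1) / (γ - 1)) a b := by
  obtain ⟨t, ht, rfl⟩ : ∃ t, 1 < t ∧ b = a * t :=
    ⟨b / a, (one_lt_div ha).2 hab, by field_simp⟩
  have ht0 : 0 < t := zero_lt_one.trans ht
  have hγ1 : 0 < γ - 1 := sub_pos.2 hγ
  have ht1 : 0 < t - 1 := sub_pos.2 ht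
  have hscale : a ^ γ + (a * t) ^ γ
        - 2 * a * (a * t) * slope (fun ρ => ρ ^ (γ - 1) / (γ - 1)) a (a * t)
      = a ^ γ * ((γ - 1) * (t - 1) * (1 + t ^ γ) - 2 * (t ^ γ - t)) / ((γ - 1) * (t - 1)) := by
    rw [slope_def_field, Real.mul_rpow ha.le ht0.le, Real.mul_rpow ha.le ht0.le,
      ← Real.rpow_sub_one_mul_self ha.ne' γ, ← Real.rpow_sub_one_mul_self ht0.ne' γ]
    field_simp
  rw [hscale]
  exact div_pos (mul_pos (Real.rpow_pos_of_pos ha γ) (sub_pos.2 (two_mul_rpow_sub_lt hγ ht)))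
    (mul_pos hγ1 ht1)

theorem rpow_add_rpow_sub_two_mul_mul_slope_pos {γ a b : ℝ} (hγ : 1 < γ) (ha : 0 < a)
    (hb : 0 < b) (hab : a ≠ b) :
    0 < a ^ γ + b ^ γ - 2 * a * b * slope (fun ρ => ρ ^ (γ - 1) / (γ - 1)) a b := by
  rcases hab.lt_or_gt with h | h
  · exact rpow_add_rpow_sub_two_mul_mul_slope_pos_of_lt hγ ha h
  · rw [add_comm, mul_right_comm 2 a, slope_comm]
    exact rpow_add_rpow_sub_two_mul_mul_slope_pos_of_lt hγ hb h

theorem stmt_3 (γ : ℝ) (hγ : 1 < γ) (ρm ρp : ℝ) (hρm : 0 < ρm) (hρp : 0 < ρp)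
    (hne : ρm ≠ ρp) :
    ρm ^ γ + ρp ^ γ -
      2 * ρm * ρp * ((ρp ^ (γ - 1) / (γ - 1) - ρm ^ (γ - 1) / (γ - 1)) / (ρp - ρm)) > 0 := by
  simpa only [slope_def_field] using rpow_add_rpow_sub_two_mul_mul_slope_pos hγ hρm hρp hne
end

section
/- Under the fan-subsolution Rankine–Hugoniot conditions with v₋₁ = v₊₁ (equal first velocity components on both sides), the first component α of the intermediate velocity satisfies α = v₋₁ = v₊₁ and γ₂ = αβ, where u₁ has off-diagonal entry γ₂ and the intermediate velocity is (α, β). -/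
/-!
Subtracting `v₁` times the mass condition from the momentum condition across a shock of speed
`ν` leaves `ρ₁ (ν (α - v₁) - (γ₂ - v₁ β)) = 0`. When both shocks see the same `v₁`, the two
resulting relations differ only in the speed, so `(ν₊ - ν₋) (α - v₁) = 0`; hence `α = v₁`,
and then either relation reads `γ₂ = α β`.
-/

theorem shock_momentum_relation {K : Type*} [Field K] {ρ ρ₁ ν v₁ v₂ α β γ₂ : K} (hρ₁ : ρ₁ ≠ 0)
    (hmass : ν * (ρ - ρ₁) = ρ * v₂ - ρ₁ * β)
    (hmom : ν * (ρ * v₁ - ρ₁ * α) = ρ * v₁ * v₂ - ρ₁ * γ₂) :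
    ν * (α - v₁) = γ₂ - v₁ * β :=
  mul_left_cancel₀ hρ₁ (by linear_combination v₁ * hmass - hmom)

theorem stmt_7_general (ρm ρp ρ₁ vm1 vm2 vp1 vp2 α β γ₂ νm νp : ℝ)
    (hρ₁ : 0 < ρ₁) (hν : νm < νp)
    (h1 : νm * (ρm - ρ₁) = ρm * vm2 - ρ₁ * β)
    (h2 : νm * (ρm * vm1 - ρ₁ * α) = ρm * vm1 * vm2 - ρ₁ * γ₂)
    (h3 : νp * (ρ₁ - ρp) = ρ₁ * β - ρp * vp2)
    (h4 : νp * (ρ₁ * α - ρp * vp1) = ρ₁ * γ₂ - ρp * vp1 * vp2)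
    (hv : vm1 = vp1) :
    α = vm1 ∧ α = vp1 ∧ γ₂ = α * β := by
  subst hv
  have hm := shock_momentum_relation hρ₁.ne' h1 h2
  have hp : νp * (α - vm1) = γ₂ - vm1 * β := shock_momentum_relation (ρ := ρp) (v₂ := vp2)
    hρ₁.ne' (by linear_combination -h3) (by linear_combination -h4)
  have hα : α = vm1 := by
    have h : (νp - νm) * (α - vm1) = 0 := by linear_combination hp - hm
    exact sub_eq_zero.mp ((mul_eq_zero.mp h).resolve_left (sub_ne_zero.mpr hν.ne'))
  subst hα
  exact ⟨rfl, rfl, by linear_combination -hm⟩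

theorem stmt_7 (ρm ρp ρ₁ vm1 vm2 vp1 vp2 α β γ₁ γ₂ νm νp : ℝ)
    (hρm : 0 < ρm) (hρp : 0 < ρp) (hρ₁ : 0 < ρ₁) (hν : νm < νp)
    (h1 : νm * (ρm - ρ₁) = ρm * vm2 - ρ₁ * β)
    (h2 : νm * (ρm * vm1 - ρ₁ * α) = ρm * vm1 * vm2 - ρ₁ * γ₂)
    (h3 : νp * (ρ₁ - ρp) = ρ₁ * β - ρp * vp2)
    (h4 : νp * (ρ₁ * α - ρp * vp1) = ρ₁ * γ₂ - ρp * vp1 * vp2)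
    (hv : vm1 = vp1) :
    α = vm1 ∧ α = vp1 ∧ γ₂ = α * β :=
  stmt_7_general ρm ρp ρ₁ vm1 vm2 vp1 vp2 α β γ₂ νm νp hρ₁ hν h1 h2 h3 h4 hv
end

section
/- Let ρ₋ > ρ₊ > 0, γ ≥ 1, p(r) = r^γ, and suppose u² ≥ (p(ρ₋)-p(ρ₊))/ρ₊. Set B = ρ₋ρ₊u² - (ρ₋-ρ₊)(p(ρ₋)-p(ρ₊)) (so √B ≥ ρ₊|u|). Then the function f(ρ₁) = √B·√(1-ρ₊/ρ₁) - ρ₊|u|·√(1-ρ₋/ρ₁) is positive and strictly decreasing on (ρ₋, ∞). -/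
/-!
Write `f x = b √(1 - p/x) - c √(1 - m/x)` with `b = √B`, `c = ρ₊|u|`, `p = ρ₊`, `m = ρ₋`.
The hypothesis on `u` gives `c ≤ b`, and `p^γ < m^γ` gives `b p ≤ c m`. The first makes `f`
positive because `√(1 - m/x) < √(1 - p/x)`; the second makes `f' < 0`, since up to a positive
factor `f'` is `b p √(1 - m/x) - c m √(1 - p/x)`.
-/

open Real Set

theorem hasDerivAt_sqrt_one_sub_div {a x : ℝ} (hx : 0 < x) (hax : a < x) :
    HasDerivAt (fun y => √(1 - a / y)) (a / (2 * x ^ 2 * √(1 - a / x))) x := by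
  have hpos : 0 < 1 - a / x := by rw [sub_pos, div_lt_one hx]; exact hax
  have hin : HasDerivAt (fun y => 1 - a / y) (a / x ^ 2) x := by
    simpa only [div_eq_mul_inv] using
      (((hasDerivAt_inv hx.ne').const_mul a).const_sub 1).congr_deriv (by ring)
  convert hin.sqrt hpos.ne' using 1
  ring

section SqrtDifference

variable {b c p m : ℝ}

theorem sqrt_one_sub_div_lt_sqrt_one_sub_div {x : ℝ} (hpm : p < m) (hmx : m < x) (hm : 0 < m) :
    √(1 - m / x) < √(1 - p / x) := by
  have hx : 0 < x := hm.trans hmx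
  apply Real.sqrt_lt_sqrt
  · rw [sub_nonneg, div_le_one hx]; exact hmx.le
  · gcongr

theorem sqrt_sub_sqrt_pos (hpm : p < m) (hm : 0 < m) (hb : 0 < b) (hcb : c ≤ b) :
    ∀ x ∈ Ioi m, 0 < b * √(1 - p / x) - c * √(1 - m / x) := by
  intro x hx
  have hlt := sqrt_one_sub_div_lt_sqrt_one_sub_div hpm hx hm
  rw [sub_pos]
  calc c * √(1 - m / x) ≤ b * √(1 - m / x) := by gcongr
    _ < b * √(1 - p / x) := by gcongr

theorem strictAntiOn_sqrt_sub_sqrt (hpm : p < m) (hm : 0 < m) (hc : 0 < c)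
    (hbc : b * p ≤ c * m) :
    StrictAntiOn (fun x => b * √(1 - p / x) - c * √(1 - m / x)) (Ioi m) := by
  have hderiv : ∀ x ∈ Ioi m, HasDerivAt (fun x => b * √(1 - p / x) - c * √(1 - m / x))
      (b * (p / (2 * x ^ 2 * √(1 - p / x))) - c * (m / (2 * x ^ 2 * √(1 - m / x)))) x := by
    intro x hx
    exact ((hasDerivAt_sqrt_one_sub_div (hm.trans hx) (hpm.trans hx)).const_mul b).sub
      ((hasDerivAt_sqrt_one_sub_div (hm.trans hx) hx).const_mul c)
  refine strictAntiOn_of_deriv_neg (convex_Ioi m)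
    (fun x hx => (hderiv x hx).continuousAt.continuousWithinAt) fun x hx => ?_
  rw [interior_Ioi] at hx
  rw [(hderiv x hx).deriv, sub_neg]
  have hx0 : 0 < x := hm.trans hx
  have hsm : 0 < √(1 - m / x) := Real.sqrt_pos.2 (by rw [sub_pos, div_lt_one hx0]; exact hx)
  have hlt := sqrt_one_sub_div_lt_sqrt_one_sub_div hpm hx hm
  have hsp : 0 < √(1 - p / x) := hsm.trans hlt
  have key : b * p * √(1 - m / x) < c * m * √(1 - p / x) :=
    calc b * p * √(1 - m / x) ≤ c * m * √(1 - m / x) := by gcongr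
      _ < c * m * √(1 - p / x) := by gcongr
  rw [← mul_div_assoc, ← mul_div_assoc, div_lt_div_iff₀ (by positivity) (by positivity)]
  convert mul_lt_mul_of_pos_left key (by positivity : (0 : ℝ) < 2 * x ^ 2) using 1 <;> ring

end SqrtDifference

theorem stmt_10 (ρm ρp u γ : ℝ) (hρ : ρp < ρm) (hρp : 0 < ρp) (hγ : 1 ≤ γ)
    (hu : u ^ 2 ≥ (ρm ^ γ - ρp ^ γ) / ρp)
    (B : ℝ) (hB : B = ρm * ρp * u ^ 2 - (ρm - ρp) * (ρm ^ γ - ρp ^ γ))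
    (f : ℝ → ℝ)
    (hf : ∀ ρ₁ : ℝ, f ρ₁ = Real.sqrt B * Real.sqrt (1 - ρp / ρ₁) -
      ρp * |u| * Real.sqrt (1 - ρm / ρ₁)) :
    (∀ ρ₁ ∈ Set.Ioi ρm, 0 < f ρ₁) ∧ StrictAntiOn f (Set.Ioi ρm) := by
  obtain rfl : f = fun x => √B * √(1 - ρp / x) - ρp * |u| * √(1 - ρm / x) := funext hf
  have hm : 0 < ρm := hρp.trans hρ
  have hP : 0 < ρm ^ γ - ρp ^ γ := sub_pos.2 (rpow_lt_rpow hρp.le hρ (by linarith))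
  have hPu : ρm ^ γ - ρp ^ γ ≤ ρp * u ^ 2 := by rwa [ge_iff_le, div_le_iff₀' hρp] at hu
  have hu0 : 0 < |u| := by
    have : 0 < u ^ 2 := pos_of_mul_pos_right (hP.trans_le hPu) hρp.le
    exact abs_pos.2 fun h => by simp [h] at this
  have hc : 0 < ρp * |u| := mul_pos hρp hu0
  have hcb : ρp * |u| ≤ √B := by
    refine Real.le_sqrt_of_sq_le ?_
    rw [hB, mul_pow, sq_abs]
    linarith [mul_le_mul_of_nonneg_left hPu (sub_pos.2 hρ).le]
  have hbc : √B * ρp ≤ ρp * |u| * ρm := by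
    have : √B ≤ |u| * ρm := by
      rw [Real.sqrt_le_left (by positivity), hB, mul_pow, sq_abs]
      linarith [mul_le_mul_of_nonneg_left hρ.le (mul_nonneg hm.le (sq_nonneg u)),
        mul_pos (sub_pos.2 hρ) hP]
    nlinarith
  exact ⟨sqrt_sub_sqrt_pos hρ hm (hc.trans_le hcb) hcb, strictAntiOn_sqrt_sub_sqrt hρ hm hc hbc⟩
end

section
/- Let ρ₋ > ρ₊ > 0, γ ≥ 1, p(r)=r^γ, and suppose (ρ₋-ρ₊)(p(ρ₋)-p(ρ₊))/(ρ₋ρ₊) < u² < (p(ρ₋)-p(ρ₊))/ρ₊. Set B = ρ₋ρ₊u² - (ρ₋-ρ₊)(p(ρ₋)-p(ρ₊)) > 0. Then (ρ₊|u| - √B)² < p'(ρ₋)(ρ₋-ρ₊)², where p'(ρ₋) = γρ₋^{γ-1}. -/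
lemma aux_rpow_sub (x y γ : ℝ) (hy : 0 < y) (hxy : y < x) (hγ : 1 ≤ γ) :
    x ^ γ - y ^ γ ≤ γ * x ^ (γ - 1) * (x - y) := by
  have hx : 0 < x := hy.trans hxy
  have hs : (-1 : ℝ) ≤ y / x - 1 := by
    have : 0 < y / x := div_pos hy hx
    linarith
  have hb := one_add_mul_self_le_rpow_one_add hs hγ
  have h1 : (1 : ℝ) + (y / x - 1) = y / x := by ring
  rw [h1] at hb
  have hdiv : (y / x) ^ γ = y ^ γ / x ^ γ := Real.div_rpow hy.le hx.le γ
  rw [hdiv] at hb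
  have hxγ : (0 : ℝ) < x ^ γ := Real.rpow_pos_of_pos hx γ
  have hb2 : (1 + γ * (y / x - 1)) * x ^ γ ≤ y ^ γ := by
    have := mul_le_mul_of_nonneg_right hb hxγ.le
    rwa [div_mul_cancel₀ _ hxγ.ne'] at this
  have hxγ1 : x ^ (γ - 1) * x = x ^ γ := by
    rw [← Real.rpow_add_one hx.ne' (γ - 1)]
    ring_nf
  have hsx : (y / x - 1) * x ^ γ = (y - x) * x ^ (γ - 1) := by
    rw [← hxγ1]
    field_simp
  nlinarith [hb2, hsx]

theorem stmt_11 (ρm ρp u γ : ℝ) (hρ : ρp < ρm) (hρp : 0 < ρp) (hγ : 1 ≤ γ)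
    (hu1 : (ρm - ρp) * (ρm ^ γ - ρp ^ γ) / (ρm * ρp) < u ^ 2)
    (hu2 : u ^ 2 < (ρm ^ γ - ρp ^ γ) / ρp)
    (B : ℝ) (hB : B = ρm * ρp * u ^ 2 - (ρm - ρp) * (ρm ^ γ - ρp ^ γ)) :
    (ρp * |u| - Real.sqrt B) ^ 2 < γ * ρm ^ (γ - 1) * (ρm - ρp) ^ 2 := by
  set P := ρm ^ γ - ρp ^ γ with hPdef
  set R := ρm - ρp with hRdef
  have hρm : 0 < ρm := hρp.trans hρ
  have hR : 0 < R := by simp [hRdef]; linarith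
  have hP : 0 < P := by
    have : ρp ^ γ < ρm ^ γ :=
      Real.rpow_lt_rpow hρp.le hρ (by linarith)
    simp [hPdef]; linarith
  -- clear denominators
  have hu1' : R * P < ρm * ρp * u ^ 2 := by
    have := (div_lt_iff₀ (by positivity)).mp hu1
    linarith
  have hu2' : ρp * u ^ 2 < P := by
    have := (lt_div_iff₀ hρp).mp hu2
    linarith
  have hBpos : 0 < B := by rw [hB]; linarith
  have hu2pos : 0 < u ^ 2 := by
    have : 0 < R * P / (ρm * ρp) := by positivity
    linarith
  have habs : 0 < |u| := abs_pos.mpr (by rintro rfl; simp at hu2pos)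
  have hPR : 0 < P * R := mul_pos hP hR
  have hsPR : 0 < Real.sqrt (P * R) := Real.sqrt_pos.mpr hPR
  have hsB : 0 ≤ Real.sqrt B := Real.sqrt_nonneg B
  have hsBsq : Real.sqrt B ^ 2 = B := Real.sq_sqrt hBpos.le
  have hsPRsq : Real.sqrt (P * R) ^ 2 = P * R := Real.sq_sqrt hPR.le
  -- upper: ρp * |u| < √B + √(P*R)
  have hup : ρp * |u| < Real.sqrt B + Real.sqrt (P * R) := by
    have h1 : (ρp * |u|) ^ 2 < (Real.sqrt B + Real.sqrt (P * R)) ^ 2 := by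
      have hsq : (ρp * |u|) ^ 2 = ρp ^ 2 * u ^ 2 := by
        rw [mul_pow, sq_abs]
      nlinarith [mul_nonneg hsB hsPR.le, sq_nonneg u]
    exact lt_of_pow_lt_pow_left₀ 2 (by positivity) h1
  -- lower: √B < ρp * |u| + √(P*R)
  have hlow : Real.sqrt B < ρp * |u| + Real.sqrt (P * R) := by
    rw [Real.sqrt_lt' (by positivity)]
    have hsq : (ρp * |u|) ^ 2 = ρp ^ 2 * u ^ 2 := by rw [mul_pow, sq_abs]
    nlinarith [mul_nonneg (mul_nonneg hρp.le habs.le) hsPR.le]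
  have hkey : (ρp * |u| - Real.sqrt B) ^ 2 < P * R := by
    have := sq_lt_sq' (by linarith) (by linarith :
      ρp * |u| - Real.sqrt B < Real.sqrt (P * R))
    calc (ρp * |u| - Real.sqrt B) ^ 2 < Real.sqrt (P * R) ^ 2 := this
      _ = P * R := hsPRsq
  have hconv : P ≤ γ * ρm ^ (γ - 1) * R := aux_rpow_sub ρm ρp γ hρp hρ hγ
  have : P * R ≤ γ * ρm ^ (γ - 1) * R ^ 2 := by nlinarith
  linarith
end

section
/- Let 1 ≤ γ < 3 and ρ₋ > ρ₊ > 0, with Q and z defined as above. Then z is strictly increasing on (ρ₋, ∞) with z(ρ₋) = 0 and z(ρ₁) → ∞ as ρ₁ → ∞; hence for every B > 0 the equation z(ρ₁) = B has a unique solution ρ̄ > ρ₋. -/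
/-!
Write `a = ρ₊ < b = ρ₋`, `s` for the slope of the chord of `Q` over `[a, b]` and `W` for the gap
between `Q` and that chord, so that `z = 2 (Q' - s)(x - b)(x - a) - (2x - b - a) W`.
Since `Q'' > 0`, `Q` is strictly convex, whence `Q' x > s` and `W x ≤ (Q' x - s)(x - b)` for
`x ≥ b`. Then
`z' = 2 Q'' (x - b)(x - a) + (Q' - s)(b - a) + 2 ((Q' - s)(x - b) - W) > 0`,
and `z x ≥ (Q' b - s)(b - a)(x - b)` grows linearly; `z b = 0` because `W b = 0`.
The intermediate value theorem then gives the unique solution of `z = B`.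
-/

open Filter Topology Set

noncomputable def chordGap (Q : ℝ → ℝ) (a b x : ℝ) : ℝ :=
  Q x - (Q b + slope Q a b * (x - b))

noncomputable def chordZ (Q : ℝ → ℝ) (a b x : ℝ) : ℝ :=
  2 * (deriv Q x - slope Q a b) * (x - b) * (x - a) - (2 * x - b - a) * chordGap Q a b x

lemma chordGap_right (Q : ℝ → ℝ) (a b : ℝ) : chordGap Q a b b = 0 := by
  simp [chordGap]

lemma chordZ_right (Q : ℝ → ℝ) (a b : ℝ) : chordZ Q a b b = 0 := by
  simp [chordZ, chordGap_right]

lemma chordGap_eq_slope_sub_mul (Q : ℝ → ℝ) (a : ℝ) {b x : ℝ} (hbx : b ≠ x) :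
    chordGap Q a b x = (slope Q b x - slope Q a b) * (x - b) := by
  rw [chordGap, slope_def_field Q b x, sub_mul, div_mul_cancel₀ _ (sub_ne_zero.2 hbx.symm)]
  ring

lemma existsUnique_eq_of_strictMonoOn_Ici {f : ℝ → ℝ} {b B : ℝ} (hcont : ContinuousOn f (Ici b))
    (hmono : StrictMonoOn f (Ici b)) (htop : Tendsto f atTop atTop) (hB : f b < B) :
    ∃! x, b < x ∧ f x = B := by
  obtain ⟨R, hRB, hbR⟩ := ((htop.eventually_ge_atTop B).and (eventually_ge_atTop b)).exists
  obtain ⟨x, hx, hfx⟩ := intermediate_value_Icc hbR (hcont.mono Icc_subset_Ici_self) ⟨hB.le, hRB⟩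
  have hbx : b < x := hx.1.lt_of_ne (by rintro rfl; exact hB.ne hfx)
  exact ⟨x, ⟨hbx, hfx⟩, fun y hy =>
    hmono.injOn (mem_Ici.2 hy.1.le) (mem_Ici.2 hbx.le) (hy.2.trans hfx.symm)⟩

section StrictlyConvex

variable {Q q' q'' : ℝ → ℝ} {a b : ℝ}

lemma strictMonoOn_Ici_of_hasDerivAt_pos (hq' : ∀ x, a ≤ x → HasDerivAt q' (q'' x) x)
    (hq'' : ∀ x, a < x → 0 < q'' x) : StrictMonoOn q' (Ici a) := by
  refine strictMonoOn_of_deriv_pos (convex_Ici a)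
    (fun x hx => (hq' x hx).continuousAt.continuousWithinAt) fun x hx => ?_
  rw [interior_Ici] at hx
  rw [(hq' x (le_of_lt hx)).deriv]
  exact hq'' x hx

lemma strictConvexOn_Ici_of_hasDerivAt (hQ : ∀ x, a ≤ x → HasDerivAt Q (q' x) x)
    (hmono : StrictMonoOn q' (Ici a)) : StrictConvexOn ℝ (Ici a) Q := by
  refine StrictMonoOn.strictConvexOn_of_deriv (convex_Ici a)
    (fun x hx => (hQ x hx).continuousAt.continuousWithinAt) ?_
  rw [interior_Ici]
  exact (hmono.mono Ioi_subset_Ici_self).congr fun x hx => ((hQ x (le_of_lt hx)).deriv).symm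

lemma slope_lt_of_strictMonoOn (hab : a < b) (hQ : ∀ x, a ≤ x → HasDerivAt Q (q' x) x)
    (hmono : StrictMonoOn q' (Ici a)) {x : ℝ} (hbx : b ≤ x) : slope Q a b < q' x :=
  ((strictConvexOn_Ici_of_hasDerivAt hQ hmono).slope_lt_of_hasDerivAt (mem_Ici.2 le_rfl)
    hab.le hab (hQ b hab.le)).trans_le (hmono.monotoneOn hab.le (hab.le.trans hbx) hbx)

lemma chordGap_le (hab : a < b) (hQ : ∀ x, a ≤ x → HasDerivAt Q (q' x) x)
    (hmono : StrictMonoOn q' (Ici a)) {x : ℝ} (hbx : b ≤ x) :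
    chordGap Q a b x ≤ (q' x - slope Q a b) * (x - b) := by
  rcases hbx.eq_or_lt with rfl | hbx
  · simp [chordGap_right]
  rw [chordGap_eq_slope_sub_mul Q a hbx.ne]
  have hslope : slope Q b x ≤ q' x :=
    (strictConvexOn_Ici_of_hasDerivAt hQ hmono).convexOn.slope_le_of_hasDerivAt hab.le
      (hab.trans hbx).le hbx (hQ x (hab.trans hbx).le)
  gcongr

lemma le_chordZ (hab : a < b) (hQ : ∀ x, a ≤ x → HasDerivAt Q (q' x) x)
    (hmono : StrictMonoOn q' (Ici a)) {x : ℝ} (hbx : b ≤ x) :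
    (q' b - slope Q a b) * (b - a) * (x - b) ≤ chordZ Q a b x := by
  have hax : a ≤ x := hab.le.trans hbx
  have hgap := chordGap_le hab hQ hmono hbx
  have hq'bx : q' b ≤ q' x := hmono.monotoneOn hab.le hax hbx
  rw [chordZ, (hQ x hax).deriv]
  nlinarith [mul_le_mul_of_nonneg_left hgap (by linarith : 0 ≤ 2 * x - b - a),
    mul_le_mul_of_nonneg_right hq'bx (by nlinarith : 0 ≤ (b - a) * (x - b))]

lemma tendsto_chordZ_atTop (hab : a < b) (hQ : ∀ x, a ≤ x → HasDerivAt Q (q' x) x)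
    (hmono : StrictMonoOn q' (Ici a)) : Tendsto (chordZ Q a b) atTop atTop := by
  have hk : 0 < (q' b - slope Q a b) * (b - a) :=
    mul_pos (sub_pos.2 (slope_lt_of_strictMonoOn hab hQ hmono le_rfl)) (sub_pos.2 hab)
  refine tendsto_atTop_mono' atTop ?_
    ((tendsto_atTop_add_const_right atTop (-b) tendsto_id).const_mul_atTop hk)
  filter_upwards [eventually_ge_atTop b] with x hx using le_chordZ hab hQ hmono hx

lemma hasDerivAt_chordGap (hQ : ∀ x, a ≤ x → HasDerivAt Q (q' x) x) {x : ℝ} (hax : a ≤ x) :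
    HasDerivAt (chordGap Q a b) (q' x - slope Q a b) x := by
  have h := (hQ x hax).sub
    (HasDerivAt.const_add (Q b) (((hasDerivAt_id' x).sub_const b).const_mul (slope Q a b)))
  exact h.congr_deriv (by ring)

lemma hasDerivAt_chordZ (hQ : ∀ x, a ≤ x → HasDerivAt Q (q' x) x)
    (hq' : ∀ x, a ≤ x → HasDerivAt q' (q'' x) x) {x : ℝ} (hax : a < x) :
    HasDerivAt (chordZ Q a b)
      (2 * q'' x * ((x - b) * (x - a)) + (q' x - slope Q a b) * (b - a)
        + 2 * ((q' x - slope Q a b) * (x - b) - chordGap Q a b x)) x := by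
  have hev : (fun y => 2 * (q' y - slope Q a b) * (y - b) * (y - a)
      - (2 * y - b - a) * chordGap Q a b y) =ᶠ[𝓝 x] chordZ Q a b := by
    filter_upwards [eventually_gt_nhds hax] with y hy
    rw [chordZ, (hQ y hy.le).deriv]
  have hq'x := (hq' x hax.le).sub_const (slope Q a b)
  have hid := hasDerivAt_id' x
  refine HasDerivAt.congr_of_eventuallyEq ?_ hev.symm
  exact ((((hq'x.const_mul 2).mul (hid.sub_const b)).mul (hid.sub_const a)).sub
    ((((hid.const_mul 2).sub_const b).sub_const a).mul
      (hasDerivAt_chordGap hQ hax.le))).congr_deriv (by simp only [Pi.mul_apply]; ring)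

lemma continuousOn_chordZ (hQ : ∀ x, a ≤ x → HasDerivAt Q (q' x) x)
    (hq' : ∀ x, a ≤ x → HasDerivAt q' (q'' x) x) : ContinuousOn (chordZ Q a b) (Ioi a) :=
  fun _ hx => (hasDerivAt_chordZ hQ hq' hx).continuousAt.continuousWithinAt

lemma strictMonoOn_chordZ (hab : a < b) (hQ : ∀ x, a ≤ x → HasDerivAt Q (q' x) x)
    (hq' : ∀ x, a ≤ x → HasDerivAt q' (q'' x) x) (hq'' : ∀ x, a < x → 0 < q'' x) :
    StrictMonoOn (chordZ Q a b) (Ici b) := by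
  have hmono := strictMonoOn_Ici_of_hasDerivAt_pos hq' hq''
  refine strictMonoOn_of_deriv_pos (convex_Ici b)
    ((continuousOn_chordZ hQ hq').mono fun x hx => hab.trans_le hx) fun x hx => ?_
  rw [interior_Ici] at hx
  have hax : a < x := hab.trans hx
  rw [(hasDerivAt_chordZ hQ hq' hax).deriv]
  have hslope := sub_pos.2 (slope_lt_of_strictMonoOn hab hQ hmono hx.le)
  have hgap := chordGap_le hab hQ hmono hx.le
  have hcurv : 0 ≤ 2 * q'' x * ((x - b) * (x - a)) := by
    have := hq'' x hax
    have : 0 < x - b := sub_pos.2 hx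
    have : 0 < x - a := sub_pos.2 hax
    positivity
  nlinarith [mul_pos hslope (sub_pos.2 hab)]

end StrictlyConvex

lemma exists_hasDerivAt_hasDerivAt_pos {γ : ℝ} (hγ1 : 1 ≤ γ) (hγ3 : γ < 3) {Q : ℝ → ℝ}
    (hQ : ∀ ρ : ℝ, Q ρ = if γ = 1 then 2 * ρ * Real.log ρ - ρ
      else (3 - γ) / (γ - 1) * ρ ^ γ) :
    ∃ q' q'' : ℝ → ℝ, (∀ x, 0 < x → HasDerivAt Q (q' x) x) ∧
      (∀ x, 0 < x → HasDerivAt q' (q'' x) x) ∧ ∀ x, 0 < x → 0 < q'' x := by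
  by_cases hγ : γ = 1
  · have hQeq : Q = fun ρ => 2 * (ρ * Real.log ρ) - ρ := by
      funext ρ; rw [hQ ρ, if_pos hγ]; ring
    refine ⟨fun x => 2 * Real.log x + 1, fun x => 2 * x⁻¹, fun x hx => ?_, fun x hx => ?_,
      fun x hx => by positivity⟩
    · rw [hQeq]
      exact (((Real.hasDerivAt_mul_log hx.ne').const_mul 2).sub (hasDerivAt_id x)).congr_deriv
        (by ring)
    · exact ((Real.hasDerivAt_log hx.ne').const_mul 2).add_const 1
  · have hγ1' : 1 < γ := hγ1.lt_of_ne' hγ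
    set A := (3 - γ) / (γ - 1)
    have hA : 0 < A := div_pos (by linarith) (by linarith)
    have hQeq : Q = fun ρ => A * ρ ^ γ := by
      funext ρ; rw [hQ ρ, if_neg hγ]
    refine ⟨fun x => A * (γ * x ^ (γ - 1)), fun x => A * (γ * ((γ - 1) * x ^ (γ - 1 - 1))),
      fun x hx => ?_, fun x hx => ?_, fun x hx => ?_⟩
    · rw [hQeq]
      exact (Real.hasDerivAt_rpow_const (Or.inl hx.ne')).const_mul A
    · exact ((Real.hasDerivAt_rpow_const (Or.inl hx.ne')).const_mul γ).const_mul A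
    · have : 0 < γ - 1 := by linarith
      have : 0 < γ := by linarith
      positivity

theorem stmt_18 (γ ρm ρp : ℝ) (hγ1 : 1 ≤ γ) (hγ3 : γ < 3) (hρ : ρp < ρm) (hρp : 0 < ρp)
    (Q : ℝ → ℝ)
    (hQ : ∀ ρ : ℝ, Q ρ = if γ = 1 then 2 * ρ * Real.log ρ - ρ
      else (3 - γ) / (γ - 1) * ρ ^ γ)
    (z : ℝ → ℝ)
    (hz : ∀ ρ₁ : ℝ, z ρ₁ =
      2 * (deriv Q ρ₁ - (Q ρm - Q ρp) / (ρm - ρp)) * (ρ₁ - ρm) * (ρ₁ - ρp) -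
      (2 * ρ₁ - ρm - ρp) *
        (Q ρ₁ - ρ₁ * ((Q ρm - Q ρp) / (ρm - ρp)) + (ρp * Q ρm - ρm * Q ρp) / (ρm - ρp))) :
    StrictMonoOn z (Set.Ici ρm) ∧ z ρm = 0 ∧ Tendsto z atTop atTop ∧
    (∀ B : ℝ, 0 < B → ∃! ρbar : ℝ, ρm < ρbar ∧ z ρbar = B) := by
  obtain ⟨q', q'', hQ', hq', hq''⟩ := exists_hasDerivAt_hasDerivAt_pos hγ1 hγ3 hQ
  replace hQ' : ∀ x, ρp ≤ x → HasDerivAt Q (q' x) x := fun x hx => hQ' x (hρp.trans_le hx)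
  replace hq' : ∀ x, ρp ≤ x → HasDerivAt q' (q'' x) x := fun x hx => hq' x (hρp.trans_le hx)
  replace hq'' : ∀ x, ρp < x → 0 < q'' x := fun x hx => hq'' x (hρp.trans hx)
  obtain rfl : z = chordZ Q ρp ρm := by
    have hsub : ρm - ρp ≠ 0 := sub_ne_zero.2 hρ.ne'
    funext x
    rw [hz, chordZ, chordGap, slope_def_field]
    field_simp
    ring
  have hmono := strictMonoOn_chordZ hρ hQ' hq' hq''
  have htop := tendsto_chordZ_atTop hρ hQ' (strictMonoOn_Ici_of_hasDerivAt_pos hq' hq'')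
  refine ⟨hmono, chordZ_right Q ρp ρm, htop, fun B hB => ?_⟩
  refine existsUnique_eq_of_strictMonoOn_Ici ?_ hmono htop (by rwa [chordZ_right])
  exact (continuousOn_chordZ hQ' hq').mono fun x hx => hρ.trans_le hx
end
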